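/- Characterization of the subgame perfect equilibria of the 0,1-game: for every strategy profile s with S0(s) or S1(s), (SAcBes(s) ∨ SBcAes(s)) holds if and only if SPE(s) holds. -/

import Mathlib

/-- The two agents of the game. -/
inductive Agent : Type
  | A
  | B

/-- The two choices: down and right. -/
inductive Choice : Type
  | d
  | r

/-- Payoff assignments for the agents. -/
abbrev Payoffs : Type := Agent → ℝ

/-! ### Strategy profiles: final coalgebra of `X ↦ ℝ^P + P × Choice × X × X` -/

def StratProfF : PFunctor.{0} :=
  ⟨Payoffs ⊕ (Agent × Choice), fun x =>
    match x with
    | Sum.inl _ => Empty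
    | Sum.inr _ => Bool⟩

/-- Strategy profiles: the final coalgebra (M-type) of `StratProfF`. -/
abbrev StratProf : Type := StratProfF.M

/-- Leaf strategy profile `⟨⟨f⟩⟩`. -/
def sleaf (f : Payoffs) : StratProf :=
  PFunctor.M.mk ⟨Sum.inl f, fun (e : Empty) => e.elim⟩

/-- Node strategy profile `⟨⟨p, c, s_d, s_r⟩⟩` (`true` child = down, `false` child = right). -/
def snode (p : Agent) (c : Choice) (sd sr : StratProf) : StratProf :=
  PFunctor.M.mk ⟨Sum.inr (p, c), fun (b : Bool) => if b then sd else sr⟩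

/-- Convergence `↓s`: the least predicate closed under the given rules. -/
inductive Conv : StratProf → Prop
  | leaf (f : Payoffs) : Conv (sleaf f)
  | down (p : Agent) (sd sr : StratProf) : Conv sd → Conv (snode p Choice.d sd sr)
  | right (p : Agent) (sd sr : StratProf) : Conv sr → Conv (snode p Choice.r sd sr)

/-- One step of the strong-convergence condition. -/
def SConvStep (R : StratProf → Prop) (s : StratProf) : Prop :=
  (∃ f, s = sleaf f) ∨
    ∃ p c sd sr, s = snode p c sd sr ∧ Conv s ∧ R sd ∧ R sr

/-- Strong convergence `⇓s`: the largest predicate `R` with `R ≤ SConvStep R`. -/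
def SConv (s : StratProf) : Prop :=
  ∃ R : StratProf → Prop, R s ∧ ∀ t, R t → SConvStep R t

/-- One step of the `□Φ` condition. -/
def BoxStep (Φ : StratProf → Prop) (R : StratProf → Prop) (t : StratProf) : Prop :=
  Φ t ∧ ∀ p c sd sr, t = snode p c sd sr → R sd ∧ R sr

/-- The modality `□Φ`: the largest predicate `R` with `R ≤ BoxStep Φ R`. -/
def Box (Φ : StratProf → Prop) (s : StratProf) : Prop :=
  ∃ R : StratProf → Prop, R s ∧ ∀ t, R t → BoxStep Φ R t

/-- The partial payoff function `ŝ`, as an inductively defined graph relation: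
`PayoffRel s f` means "`ŝ` is defined and equals `f`". -/
inductive PayoffRel : StratProf → Payoffs → Prop
  | leaf (f : Payoffs) : PayoffRel (sleaf f) f
  | down (p : Agent) (sd sr : StratProf) (f : Payoffs) :
      PayoffRel sd f → PayoffRel (snode p Choice.d sd sr) f
  | right (p : Agent) (sd sr : StratProf) (f : Payoffs) :
      PayoffRel sr f → PayoffRel (snode p Choice.r sd sr) f

/-- Bisimilarity `s' ~ s`: the largest relation satisfying the coinductive clauses. -/
def Bisim (s' s : StratProf) : Prop :=
  ∃ R : StratProf → StratProf → Prop, R s' s ∧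
    ∀ t' t, R t' t →
      ((∃ f, t' = sleaf f ∧ t = sleaf f) ∨
        ∃ p c td' tr' td tr,
          t' = snode p c td' tr' ∧ t = snode p c td tr ∧ R td' td ∧ R tr' tr)

/-- The subprofile relation `s' ≼ s`: the least relation closed under the given rules. -/
inductive Subprof : StratProf → StratProf → Prop
  | bisim {s' s : StratProf} : Bisim s' s → Subprof s' s
  | down {s' : StratProf} {p : Agent} {c : Choice} {sd sr : StratProf} :
      Subprof s' sd → Subprof s' (snode p c sd sr)
  | right {s' : StratProf} {p : Agent} {c : Choice} {sd sr : StratProf} :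
      Subprof s' sr → Subprof s' (snode p c sd sr)

/-! ### Games: final coalgebra of `X ↦ ℝ^P + P × X × X` -/

def GameF : PFunctor.{0} :=
  ⟨Payoffs ⊕ Agent, fun x =>
    match x with
    | Sum.inl _ => Empty
    | Sum.inr _ => Bool⟩

/-- Games: the final coalgebra (M-type) of `GameF`. -/
abbrev Game : Type := GameF.M

/-- Leaf game `⟨f⟩`. -/
def gleaf (f : Payoffs) : Game :=
  PFunctor.M.mk ⟨Sum.inl f, fun (e : Empty) => e.elim⟩

/-- Node game `⟨p, g_d, g_r⟩`. -/
def gnode (p : Agent) (gd gr : Game) : Game :=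
  PFunctor.M.mk ⟨Sum.inr p, fun (b : Bool) => if b then gd else gr⟩

/-- The corecursive function `game : StratProf → Game` erasing the choices. -/
def gameOf : StratProf → Game :=
  PFunctor.M.corec (fun s =>
    match PFunctor.M.dest s with
    | ⟨Sum.inl f, _⟩ => ⟨Sum.inl f, fun (e : Empty) => e.elim⟩
    | ⟨Sum.inr pc, k⟩ => ⟨Sum.inr pc.1, k⟩)

/-! ### Strategies: final coalgebra of `X ↦ ℝ^P + (P + Choice) × X × X` -/

def StratF : PFunctor.{0} :=
  ⟨Payoffs ⊕ (Agent ⊕ Choice), fun x =>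
    match x with
    | Sum.inl _ => Empty
    | Sum.inr _ => Bool⟩

/-- Strategies: the final coalgebra (M-type) of `StratF`. -/
abbrev Strat : Type := StratF.M

/-- Leaf strategy `⟨f⟩`. -/
def stleaf (f : Payoffs) : Strat :=
  PFunctor.M.mk ⟨Sum.inl f, fun (e : Empty) => e.elim⟩

/-- Node strategy `⟨x, st₁, st₂⟩` with `x` an agent or a choice. -/
def stnode (x : Agent ⊕ Choice) (s1 s2 : Strat) : Strat :=
  PFunctor.M.mk ⟨Sum.inr x, fun (b : Bool) => if b then s1 else s2⟩

/-- The corecursive function `st2g` replacing choice labels by the given agent. -/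
def st2gStep (p : Agent) (t : Strat) : GameF.Obj Strat :=
  match PFunctor.M.dest t with
  | ⟨Sum.inl f, _⟩ => ⟨Sum.inl f, fun (e : Empty) => e.elim⟩
  | ⟨Sum.inr (Sum.inl q), k⟩ => ⟨Sum.inr q, k⟩
  | ⟨Sum.inr (Sum.inr _), k⟩ => ⟨Sum.inr p, k⟩

/-- The corecursive function `st2g` replacing choice labels by the given agent. -/
def st2g (st : Strat) (p : Agent) : Game :=
  PFunctor.M.corec (st2gStep p) st

/-- `st` is full for `p`: coinductively, the agent `p` occurs nowhere as a label. -/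
def Full (p : Agent) (st : Strat) : Prop :=
  ∃ R : Strat → Prop, R st ∧ ∀ t, R t →
    (∃ f, t = stleaf f) ∨
      ∃ x s1 s2, t = stnode x s1 s2 ∧ x ≠ Sum.inl p ∧ R s1 ∧ R s2

/-- A one-level view of a strategy. -/
inductive StratView : Type
  | leaf (f : Payoffs)
  | node (x : Agent ⊕ Choice) (k : Bool → Strat)

/-- Destruct a strategy into its one-level view. -/
def stratView (t : Strat) : StratView :=
  match PFunctor.M.dest t with
  | ⟨Sum.inl f, _⟩ => StratView.leaf f
  | ⟨Sum.inr x, k⟩ => StratView.node x k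

/-- One corecursion step for the sum of the strategy of `A` (first component)
and the strategy of `B` (second component). -/
def oplusStep : Strat × Strat → StratProfF.Obj (Strat × Strat) := fun q =>
  match stratView q.1, stratView q.2 with
  | StratView.leaf f, _ => ⟨Sum.inl f, fun (e : Empty) => e.elim⟩
  | StratView.node _ _, StratView.leaf f => ⟨Sum.inl f, fun (e : Empty) => e.elim⟩
  | StratView.node (Sum.inr c) k1, StratView.node (Sum.inl p') k2 =>
      ⟨Sum.inr (p', c), fun (b : Bool) => (k1 b, k2 b)⟩
  | StratView.node (Sum.inr c) k1, StratView.node (Sum.inr _) k2 =>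
      ⟨Sum.inr (Agent.A, c), fun (b : Bool) => (k1 b, k2 b)⟩
  | StratView.node (Sum.inl p') k1, StratView.node (Sum.inr c) k2 =>
      ⟨Sum.inr (p', c), fun (b : Bool) => (k1 b, k2 b)⟩
  | StratView.node (Sum.inl p') k1, StratView.node (Sum.inl _) k2 =>
      ⟨Sum.inr (p', Choice.d), fun (b : Bool) => (k1 b, k2 b)⟩

/-- The sum `st_A ⊕ st_B` of the strategies of the two agents. -/
def oplus (stA stB : Strat) : StratProf :=
  PFunctor.M.corec oplusStep (stA, stB)

/-! ### Equilibria -/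

/-- The local equilibrium condition `PE`. -/
def PE (s : StratProf) : Prop :=
  SConv s ∧
    (∀ p sd sr fd fr, s = snode p Choice.d sd sr →
        PayoffRel sd fd → PayoffRel sr fr → fd p ≥ fr p) ∧
    (∀ p sd sr fd fr, s = snode p Choice.r sd sr →
        PayoffRel sd fd → PayoffRel sr fr → fr p ≥ fd p)

/-- Subgame perfect equilibrium: `SPE = □PE`. -/
def SPE : StratProf → Prop := Box PE

/-- Convertibility `s ⊢p⊣ s'`: the inductively defined deviation relation of agent `p`. -/
inductive Convert (p : Agent) : StratProf → StratProf → Prop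
  | bisim {s s' : StratProf} : Bisim s s' → Convert p s s'
  | own {c c' : Choice} {s1 s2 s1' s2' : StratProf} :
      Convert p s1 s1' → Convert p s2 s2' →
      Convert p (snode p c s1 s2) (snode p c' s1' s2')
  | other {p' : Agent} {c : Choice} {s1 s2 s1' s2' : StratProf} :
      Convert p s1 s1' → Convert p s2 s2' →
      Convert p (snode p' c s1 s2) (snode p' c s1' s2')

/-- Nash equilibrium: no agent can improve her payoff by converting
(the inequality being required whenever both payoffs are defined). -/
def Nash (s : StratProf) : Prop :=
  ∀ p s' f f', Convert p s s' → PayoffRel s f → PayoffRel s' f' → f p ≥ f' p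

/-! ### The 0,1-game -/

/-- The payoff function `A ↦ 0, B ↦ 1`. -/
def f01 : Payoffs := fun p => match p with | Agent.A => 0 | Agent.B => 1

/-- The payoff function `A ↦ 1, B ↦ 0`. -/
def f10 : Payoffs := fun p => match p with | Agent.A => 1 | Agent.B => 0

/-- `S01 true = S0` and `S01 false = S1`: the largest pair of predicates
characterizing the strategy profiles of the 0,1-game. -/
def S01 (i : Bool) (s : StratProf) : Prop :=
  ∃ R : Bool → StratProf → Prop, R i s ∧
    (∀ t, R true t → ∃ c s', t = snode Agent.A c (sleaf f01) s' ∧ R false s') ∧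
    (∀ t, R false t → ∃ c s', t = snode Agent.B c (sleaf f10) s' ∧ R true s')

def S0 : StratProf → Prop := S01 true
def S1 : StratProf → Prop := S01 false

/-- One step of the `AcBes` condition. -/
def AcBesStep (R : StratProf → Prop) (s : StratProf) : Prop :=
  ∀ p c f s', s = snode p c (sleaf f) s' →
    (p = Agent.A ∧ f = f01 ∧ c = Choice.r ∧ R s') ∨
    (p = Agent.B ∧ f = f10 ∧ (c = Choice.d ∨ R s'))

/-- `AcBes`: "A continues and B eventually stops", the least predicate `R`
such that `AcBesStep R ≤ R` (impredicative encoding of the least fixed point). -/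
def AcBes (s : StratProf) : Prop :=
  ∀ R : StratProf → Prop, (∀ t, AcBesStep R t → R t) → R s

/-- One step of the `BcAes` condition. -/
def BcAesStep (R : StratProf → Prop) (s : StratProf) : Prop :=
  ∀ p c f s', s = snode p c (sleaf f) s' →
    (p = Agent.B ∧ f = f10 ∧ c = Choice.r ∧ R s') ∨
    (p = Agent.A ∧ f = f01 ∧ (c = Choice.d ∨ R s'))

/-- `BcAes`: "B continues and A eventually stops", symmetric to `AcBes`. -/
def BcAes (s : StratProf) : Prop :=
  ∀ R : StratProf → Prop, (∀ t, BcAesStep R t → R t) → R s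

def SAcBes : StratProf → Prop := Box AcBes
def SBcAes : StratProf → Prop := Box BcAes

/-! ### The 0,1-game `g01`, the escalation strategies and the all-continue profile -/

/-- Corecursion step for `g01` and `g10`:
`inl true ↦ g01`, `inl false ↦ g10`, `inr true ↦ ⟨f01⟩`, `inr false ↦ ⟨f10⟩`. -/
def g01Step : Bool ⊕ Bool → GameF.Obj (Bool ⊕ Bool)
  | Sum.inl true => ⟨Sum.inr Agent.A, fun (b : Bool) => if b then Sum.inr true else Sum.inl false⟩
  | Sum.inl false => ⟨Sum.inr Agent.B, fun (b : Bool) => if b then Sum.inr false else Sum.inl true⟩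
  | Sum.inr true => ⟨Sum.inl f01, fun (e : Empty) => e.elim⟩
  | Sum.inr false => ⟨Sum.inl f10, fun (e : Empty) => e.elim⟩

/-- The 0,1-game: `g01 = ⟨A, ⟨f01⟩, g10⟩` where `g10 = ⟨B, ⟨f10⟩, g01⟩`. -/
def g01 : Game := PFunctor.M.corec g01Step (Sum.inl true)

/-- `g10 = ⟨B, ⟨f10⟩, g01⟩`. -/
def g10 : Game := PFunctor.M.corec g01Step (Sum.inl false)

/-- Corecursion step for `st_{A,∞} = ⟨r, ⟨f01⟩, ⟨B, ⟨f10⟩, st_{A,∞}⟩⟩`. -/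
def stAinfStep : ℕ → StratF.Obj ℕ
  | 0 => ⟨Sum.inr (Sum.inr Choice.r), fun (b : Bool) => if b then 2 else 1⟩
  | 1 => ⟨Sum.inr (Sum.inl Agent.B), fun (b : Bool) => if b then 3 else 0⟩
  | 2 => ⟨Sum.inl f01, fun (e : Empty) => e.elim⟩
  | _ => ⟨Sum.inl f10, fun (e : Empty) => e.elim⟩

/-- The escalation strategy of `A`: `st_{A,∞} = ⟨r, ⟨f01⟩, ⟨B, ⟨f10⟩, st_{A,∞}⟩⟩`. -/
def stAinf : Strat := PFunctor.M.corec stAinfStep 0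

/-- Corecursion step for `st_{B,∞} = ⟨A, ⟨f01⟩, ⟨r, ⟨f10⟩, st_{B,∞}⟩⟩`. -/
def stBinfStep : ℕ → StratF.Obj ℕ
  | 0 => ⟨Sum.inr (Sum.inl Agent.A), fun (b : Bool) => if b then 2 else 1⟩
  | 1 => ⟨Sum.inr (Sum.inr Choice.r), fun (b : Bool) => if b then 3 else 0⟩
  | 2 => ⟨Sum.inl f01, fun (e : Empty) => e.elim⟩
  | _ => ⟨Sum.inl f10, fun (e : Empty) => e.elim⟩

/-- The escalation strategy of `B`: `st_{B,∞} = ⟨A, ⟨f01⟩, ⟨r, ⟨f10⟩, st_{B,∞}⟩⟩`. -/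
def stBinf : Strat := PFunctor.M.corec stBinfStep 0

/-- Corecursion step for the all-continue profile
`s_{A,∞} = ⟨⟨A, r, ⟨⟨f01⟩⟩, s_{B,∞}⟩⟩`, `s_{B,∞} = ⟨⟨B, r, ⟨⟨f10⟩⟩, s_{A,∞}⟩⟩`. -/
def sAinfStep : ℕ → StratProfF.Obj ℕ
  | 0 => ⟨Sum.inr (Agent.A, Choice.r), fun (b : Bool) => if b then 2 else 1⟩
  | 1 => ⟨Sum.inr (Agent.B, Choice.r), fun (b : Bool) => if b then 3 else 0⟩
  | 2 => ⟨Sum.inl f01, fun (e : Empty) => e.elim⟩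
  | _ => ⟨Sum.inl f10, fun (e : Empty) => e.elim⟩

/-- The all-continue profile `s_{A,∞}` of the 0,1-game. -/
def sAinf : StratProf := PFunctor.M.corec sAinfStep 0

/-- The profile `s_{B,∞}`. -/
def sBinf : StratProf := PFunctor.M.corec sAinfStep 1

/-- `s_□r`, the profile of the 0,1-game where both agents continue forever
(it satisfies `s_□r = ⟨⟨A, r, ⟨⟨f01⟩⟩, ⟨⟨B, r, ⟨⟨f10⟩⟩, s_□r⟩⟩⟩⟩`). -/
def sBoxr : StratProf := sAinf

/-- `s_{d□r} = ⟨⟨A, d, ⟨⟨f01⟩⟩, ⟨⟨B, r, ⟨⟨f10⟩⟩, s_□r⟩⟩⟩⟩`. -/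
def sdBoxr : StratProf :=
  snode Agent.A Choice.d (sleaf f01) (snode Agent.B Choice.r (sleaf f10) sBoxr)

/-! ### Finite games and profiles -/

/-- Finite strategy profiles. -/
inductive FinStratProf : Type
  | leaf (f : Payoffs)
  | node (p : Agent) (c : Choice) (sd sr : FinStratProf)

/-- Finite games. -/
inductive FinGame : Type
  | leaf (f : Payoffs)
  | node (p : Agent) (gd gr : FinGame)

/-- The (total) payoff function of a finite strategy profile. -/
def fpayoff : FinStratProf → Payoffs
  | FinStratProf.leaf f => f
  | FinStratProf.node _ Choice.d sd _ => fpayoff sd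
  | FinStratProf.node _ Choice.r _ sr => fpayoff sr

/-- The game of a finite strategy profile (erasing the choices). -/
def fgame : FinStratProf → FinGame
  | FinStratProf.leaf f => FinGame.leaf f
  | FinStratProf.node p _ sd sr => FinGame.node p (fgame sd) (fgame sr)

/-- Backward induction for finite strategy profiles. -/
inductive BI : FinStratProf → Prop
  | leaf (f : Payoffs) : BI (FinStratProf.leaf f)
  | node (p : Agent) (c : Choice) (sd sr : FinStratProf) :
      BI sd → BI sr →
      (c = Choice.d → fpayoff sd p ≥ fpayoff sr p) →
      (c = Choice.r → fpayoff sr p ≥ fpayoff sd p) →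
      BI (FinStratProf.node p c sd sr)

/-- The family `F01` of finite truncations of the 0,1-game (cut after `B`). -/
inductive F01 : FinGame → Prop
  | base : F01 (FinGame.leaf f01)
  | step (g : FinGame) : F01 g →
      F01 (FinGame.node Agent.A (FinGame.leaf f01) (FinGame.node Agent.B (FinGame.leaf f10) g))

/-- `SF01`: agent B always continues, agent A does whatever she likes. -/
inductive SF01 : FinStratProf → Prop
  | base : SF01 (FinStratProf.leaf f01)
  | step (c : Choice) (s' : FinStratProf) : SF01 s' →
      SF01 (FinStratProf.node Agent.A c (FinStratProf.leaf f01)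
        (FinStratProf.node Agent.B Choice.r (FinStratProf.leaf f10) s'))

mutual
  /-- The family `K01` of finite truncations of the 0,1-game (cut after `A`). -/
  inductive K01 : FinGame → Prop
    | step (g : FinGame) : K01' g → K01 (FinGame.node Agent.A (FinGame.leaf f01) g)
  /-- The auxiliary family `K01'`. -/
  inductive K01' : FinGame → Prop
    | base : K01' (FinGame.leaf f10)
    | step (g : FinGame) : K01 g → K01' (FinGame.node Agent.B (FinGame.leaf f10) g)
end

mutual
  /-- `SK01`: agent A always continues, agent B does whatever she likes. -/
  inductive SK01 : FinStratProf → Prop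
    | step (s' : FinStratProf) : SK01' s' →
        SK01 (FinStratProf.node Agent.A Choice.r (FinStratProf.leaf f01) s')
  /-- The auxiliary predicate `SK01'`. -/
  inductive SK01' : FinStratProf → Prop
    | base : SK01' (FinStratProf.leaf f10)
    | step (c : Choice) (s' : FinStratProf) : SK01 s' →
        SK01' (FinStratProf.node Agent.B c (FinStratProf.leaf f10) s')
end

/-!
In the 0,1-game each agent's own stopping leaf is her worst outcome (0 against 1), and every
convergent profile of the game pays `f01` or `f10`. So in an equilibrium paying `f10`, agent `A`
never stops (continuing pays her 1), while `B` must stop eventually for the payoff to be defined: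
this is `AcBes`. It propagates to all subgames, because a mover who stops cannot expect more
from the continuation, so the continuation pays `f10` again. Conversely, under `□AcBes` every
subgame pays `f10`, so `A` gains by continuing, `B` is indifferent, and each local equilibrium
condition holds. The case `f01` is symmetric.
-/

lemma snode_inj {p p' : Agent} {c c' : Choice} {sd sr sd' sr' : StratProf}
    (h : snode p c sd sr = snode p' c' sd' sr') :
    p = p' ∧ c = c' ∧ sd = sd' ∧ sr = sr' := by
  obtain ⟨hpc, hk⟩ := Sigma.mk.inj_iff.mp (PFunctor.M.mk_inj h)
  obtain ⟨rfl, rfl⟩ := Prod.mk.inj (Sum.inr.inj hpc)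
  have hk := eq_of_heq hk
  exact ⟨rfl, rfl, by simpa using congrFun hk true, by simpa using congrFun hk false⟩

lemma sleaf_ne_snode {f : Payoffs} {p : Agent} {c : Choice} {sd sr : StratProf} :
    sleaf f ≠ snode p c sd sr :=
  fun h => Sum.inl_ne_inr (congrArg Sigma.fst (PFunctor.M.mk_inj h))

lemma sleaf_inj {f g : Payoffs} (h : sleaf f = sleaf g) : f = g :=
  Sum.inl.inj (congrArg Sigma.fst (PFunctor.M.mk_inj h))

section PayoffRel

variable {p : Agent} {sd sr : StratProf} {f g : Payoffs}

lemma payoffRel_sleaf_iff : PayoffRel (sleaf f) g ↔ g = f := by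
  refine ⟨fun h => ?_, fun h => h ▸ PayoffRel.leaf f⟩
  generalize hs : sleaf f = s at h
  cases h with
  | leaf => exact (sleaf_inj hs).symm
  | down => exact absurd hs sleaf_ne_snode
  | right => exact absurd hs sleaf_ne_snode

lemma payoffRel_snode_d_iff : PayoffRel (snode p Choice.d sd sr) g ↔ PayoffRel sd g := by
  refine ⟨fun h => ?_, PayoffRel.down p sd sr g⟩
  generalize hs : snode p Choice.d sd sr = s at h
  cases h with
  | leaf => exact absurd hs.symm sleaf_ne_snode
  | down _ _ _ _ h => obtain ⟨-, -, rfl, -⟩ := snode_inj hs; exact h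
  | right => exact absurd (snode_inj hs).2.1 Choice.noConfusion

lemma payoffRel_snode_r_iff : PayoffRel (snode p Choice.r sd sr) g ↔ PayoffRel sr g := by
  refine ⟨fun h => ?_, PayoffRel.right p sd sr g⟩
  generalize hs : snode p Choice.r sd sr = s at h
  cases h with
  | leaf => exact absurd hs.symm sleaf_ne_snode
  | down => exact absurd (snode_inj hs).2.1 Choice.noConfusion
  | right _ _ _ _ h => obtain ⟨-, -, -, rfl⟩ := snode_inj hs; exact h

lemma PayoffRel.unique {s : StratProf} (hf : PayoffRel s f) (hg : PayoffRel s g) : f = g := by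
  induction hf with
  | leaf => exact (payoffRel_sleaf_iff.mp hg).symm
  | down _ _ _ _ _ ih => exact ih (payoffRel_snode_d_iff.mp hg)
  | right _ _ _ _ _ ih => exact ih (payoffRel_snode_r_iff.mp hg)

lemma PayoffRel.conv {s : StratProf} (h : PayoffRel s f) : Conv s := by
  induction h with
  | leaf f => exact Conv.leaf f
  | down p sd sr _ _ ih => exact Conv.down p sd sr ih
  | right p sd sr _ _ ih => exact Conv.right p sd sr ih

lemma Conv.exists_payoffRel {s : StratProf} (h : Conv s) : ∃ f, PayoffRel s f := by
  induction h with
  | leaf f => exact ⟨f, PayoffRel.leaf f⟩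
  | down p sd sr _ ih => obtain ⟨f, hf⟩ := ih; exact ⟨f, PayoffRel.down p sd sr f hf⟩
  | right p sd sr _ ih => obtain ⟨f, hf⟩ := ih; exact ⟨f, PayoffRel.right p sd sr f hf⟩

end PayoffRel

section Box

variable {Φ : StratProf → Prop} {s : StratProf}

lemma Box.self (h : Box Φ s) : Φ s := by
  obtain ⟨R, hR, hstep⟩ := h
  exact (hstep s hR).1

lemma Box.children {p : Agent} {c : Choice} {sd sr : StratProf} (h : Box Φ (snode p c sd sr)) :
    Box Φ sd ∧ Box Φ sr := by
  obtain ⟨R, hR, hstep⟩ := h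
  obtain ⟨hd, hr⟩ := (hstep _ hR).2 p c sd sr rfl
  exact ⟨⟨R, hd, hstep⟩, ⟨R, hr, hstep⟩⟩

lemma SConv.conv (h : SConv s) : Conv s := by
  obtain ⟨R, hR, hstep⟩ := h
  rcases hstep s hR with ⟨f, rfl⟩ | ⟨-, -, -, -, -, hc, -⟩
  exacts [Conv.leaf f, hc]

lemma sconv_of_box_conv (h : Box Conv s) : SConv s := by
  refine ⟨Box Conv, h, fun t ht => ?_⟩
  have hc := ht.self
  cases hc with
  | leaf f => exact Or.inl ⟨f, rfl⟩
  | down p sd sr hd =>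
    exact Or.inr ⟨p, _, sd, sr, rfl, Conv.down p sd sr hd, ht.children⟩
  | right p sd sr hr =>
    exact Or.inr ⟨p, _, sd, sr, rfl, Conv.right p sd sr hr, ht.children⟩

end Box

/-! `S01 true` is `S0`: at index `i` the mover is `mover i` and stopping pays `stopPayoff i`. -/

def mover : Bool → Agent
  | true => Agent.A
  | false => Agent.B

def stopPayoff : Bool → Payoffs
  | true => f01
  | false => f10

lemma stopPayoff_injective : Function.Injective stopPayoff := by
  intro i k h
  have hA := congrFun h Agent.A
  cases i <;> cases k <;> simp_all [stopPayoff, f01, f10]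

lemma stopPayoff_self_lt_not (i : Bool) : stopPayoff i (mover i) < stopPayoff (!i) (mover i) := by
  cases i <;> norm_num [stopPayoff, mover, f01, f10]

lemma stopPayoff_self_le (i k : Bool) : stopPayoff i (mover i) ≤ stopPayoff k (mover i) := by
  rcases Bool.eq_or_eq_not k i with rfl | rfl
  exacts [le_rfl, (stopPayoff_self_lt_not i).le]

section S01

variable {i : Bool} {s : StratProf}

lemma S01.dest (h : S01 i s) :
    ∃ c s', s = snode (mover i) c (sleaf (stopPayoff i)) s' ∧ S01 (!i) s' := by
  obtain ⟨R, hR, hA, hB⟩ := h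
  cases i
  · obtain ⟨c, s', rfl, h'⟩ := hB s hR
    exact ⟨c, s', rfl, R, h', hA, hB⟩
  · obtain ⟨c, s', rfl, h'⟩ := hA s hR
    exact ⟨c, s', rfl, R, h', hA, hB⟩

lemma s01_snode {c : Choice} (h : S01 (!i) s) :
    S01 i (snode (mover i) c (sleaf (stopPayoff i)) s) := by
  refine ⟨fun k u => S01 k u ∨ (k = i ∧ u = snode (mover i) c (sleaf (stopPayoff i)) s),
    Or.inr ⟨rfl, rfl⟩, ?_, ?_⟩
  all_goals
    rintro t (ht | ⟨rfl, rfl⟩)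
    · obtain ⟨c', s', he, hs'⟩ := ht.dest
      exact ⟨c', s', he, Or.inl hs'⟩
    · exact ⟨c, s, rfl, Or.inl h⟩

lemma S01.exists_stopPayoff_eq {f : Payoffs} (hs : S01 i s) (h : PayoffRel s f) :
    ∃ k, f = stopPayoff k := by
  induction h generalizing i with
  | leaf =>
    obtain ⟨c, s', he, -⟩ := hs.dest
    exact absurd he sleaf_ne_snode
  | down _ _ _ _ hd =>
    obtain ⟨c, s', he, -⟩ := hs.dest
    obtain ⟨-, -, rfl, -⟩ := snode_inj he
    exact ⟨i, payoffRel_sleaf_iff.mp hd⟩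
  | right _ _ _ _ _ ih =>
    obtain ⟨c, s', he, hs'⟩ := hs.dest
    obtain ⟨-, -, -, rfl⟩ := snode_inj he
    exact ih hs'

/-- The subprofiles of a game profile are game profiles and leaves, so an invariant `Q` of game
profiles suffices. -/
lemma box_of_s01 {Φ Q : StratProf → Prop} (hleaf : ∀ f, Φ (sleaf f))
    (hstep : ∀ i c s', S01 (!i) s' → Q (snode (mover i) c (sleaf (stopPayoff i)) s') →
      Φ (snode (mover i) c (sleaf (stopPayoff i)) s') ∧ Q s')
    (hs : S01 i s) (hQ : Q s) : Box Φ s := by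
  refine ⟨fun u => (∃ f, u = sleaf f) ∨ ∃ i, S01 i u ∧ Q u, Or.inr ⟨i, hs, hQ⟩, ?_⟩
  rintro t (⟨f, rfl⟩ | ⟨i, ht, hQt⟩)
  · exact ⟨hleaf f, fun _ _ _ _ he => absurd he sleaf_ne_snode⟩
  · obtain ⟨c, s', rfl, hs'⟩ := ht.dest
    obtain ⟨hΦ, hQ'⟩ := hstep i c s' hs' hQt
    refine ⟨hΦ, fun p c' sd sr he => ?_⟩
    obtain ⟨-, -, rfl, rfl⟩ := snode_inj he
    exact ⟨Or.inl ⟨_, rfl⟩, Or.inr ⟨!i, hs', hQ'⟩⟩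

end S01

/-- `ContStop true` and `ContStop false` unfold to `AcBes` and `BcAes`. -/
def ContStopStep (j : Bool) (R : StratProf → Prop) (s : StratProf) : Prop :=
  ∀ p c f s', s = snode p c (sleaf f) s' →
    (p = mover j ∧ f = stopPayoff j ∧ c = Choice.r ∧ R s') ∨
    (p = mover (!j) ∧ f = stopPayoff (!j) ∧ (c = Choice.d ∨ R s'))

def ContStop (j : Bool) (s : StratProf) : Prop :=
  ∀ R : StratProf → Prop, (∀ t, ContStopStep j R t → R t) → R s

section ContStop

variable {i j : Bool} {s : StratProf}

lemma contStop_sleaf (f : Payoffs) : ContStop j (sleaf f) :=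
  fun _ hR => hR _ fun _ _ _ _ he => absurd he sleaf_ne_snode

lemma ContStop.payoffRel (h : ContStop j s) (hs : S01 i s) : PayoffRel s (stopPayoff (!j)) := by
  refine h (fun u => ∀ i, S01 i u → PayoffRel u (stopPayoff (!j))) (fun t ht i hs => ?_) i hs
  obtain ⟨c, s', rfl, hs'⟩ := hs.dest
  rcases ht _ c _ s' rfl with ⟨-, -, rfl, hR⟩ | ⟨-, hf, rfl | hR⟩
  · exact PayoffRel.right _ _ _ _ (hR _ hs')
  · exact PayoffRel.down _ _ _ _ (hf ▸ PayoffRel.leaf _)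
  · cases c
    · exact PayoffRel.down _ _ _ _ (hf ▸ PayoffRel.leaf _)
    · exact PayoffRel.right _ _ _ _ (hR _ hs')

lemma contStop_of_payoffRel {f : Payoffs} (h : PayoffRel s f) (hf : f = stopPayoff (!j))
    (hs : S01 i s) : ContStop j s := by
  intro R hR
  induction h generalizing i with
  | leaf => exact hR _ fun _ _ _ _ he => absurd he sleaf_ne_snode
  | down p sd sr f hd =>
    obtain ⟨c, s', he, -⟩ := hs.dest
    obtain ⟨rfl, -, rfl, rfl⟩ := snode_inj he
    have hij : i = !j := stopPayoff_injective ((payoffRel_sleaf_iff.mp hd).symm.trans hf)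
    refine hR _ fun p' c' f' s'' he' => Or.inr ?_
    obtain ⟨rfl, rfl, hf', -⟩ := snode_inj he'
    exact ⟨hij ▸ rfl, sleaf_inj hf'.symm ▸ hij ▸ rfl, Or.inl rfl⟩
  | right p sd sr f _ ih =>
    obtain ⟨c, s', he, hs'⟩ := hs.dest
    obtain ⟨rfl, -, rfl, rfl⟩ := snode_inj he
    have hR' := ih hf hs'
    refine hR _ fun p' c' f' s'' he' => ?_
    obtain ⟨rfl, rfl, hf', rfl⟩ := snode_inj he'
    rcases Bool.eq_or_eq_not i j with rfl | rfl
    · exact Or.inl ⟨rfl, sleaf_inj hf'.symm, rfl, hR'⟩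
    · exact Or.inr ⟨rfl, sleaf_inj hf'.symm, Or.inr hR'⟩

end ContStop

lemma pe_sleaf (f : Payoffs) : PE (sleaf f) :=
  ⟨⟨(· = sleaf f), rfl, fun _ ht => Or.inl ⟨f, ht⟩⟩,
    fun _ _ _ _ _ he => absurd he sleaf_ne_snode, fun _ _ _ _ _ he => absurd he sleaf_ne_snode⟩

lemma pe_snode {p : Agent} {c : Choice} {sd sr : StratProf} {gd gr : Payoffs}
    (hconv : SConv (snode p c sd sr)) (hd : PayoffRel sd gd) (hr : PayoffRel sr gr)
    (hdown : c = Choice.d → gr p ≤ gd p) (hright : c = Choice.r → gd p ≤ gr p) :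
    PE (snode p c sd sr) := by
  refine ⟨hconv, ?_, ?_⟩ <;> intro p' sd' sr' fd fr he hfd hfr <;>
    obtain ⟨rfl, rfl, rfl, rfl⟩ := snode_inj he.symm <;>
    rw [hfd.unique hd, hfr.unique hr]
  exacts [hdown rfl, hright rfl]

section Characterization

variable {i j : Bool} {s : StratProf}

lemma pe_of_box_contStop (h : Box (ContStop j) s) (hs : S01 i s) : PE s := by
  have hconv : Box Conv s := box_of_s01 Conv.leaf
    (fun _ _ _ hs' hQ => ⟨(hQ.self.payoffRel (s01_snode hs')).conv, hQ.children.2⟩) hs h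
  obtain ⟨c, s', rfl, hs'⟩ := hs.dest
  have hpay := h.self.payoffRel hs
  refine pe_snode (sconv_of_box_conv hconv) (PayoffRel.leaf _)
    (h.children.2.self.payoffRel hs') (fun hc => ?_) (fun _ => stopPayoff_self_le i (!j))
  subst hc
  rw [payoffRel_snode_d_iff.mp hpay |> payoffRel_sleaf_iff.mp]

lemma spe_of_box_contStop (h : Box (ContStop j) s) (hs : S01 i s) : SPE s :=
  box_of_s01 pe_sleaf
    (fun _ _ _ hs' hQ => ⟨pe_of_box_contStop hQ (s01_snode hs'), hQ.children.2⟩) hs h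

/-- At a node where stopping pays `stopPayoff i`, a continuation paying `stopPayoff (!i)`
would be strictly better for the mover, so an equilibrium never stops there. -/
lemma payoffRel_of_pe_snode {c : Choice} {s' : StratProf} {g : Payoffs}
    (hpe : PE (snode (mover i) c (sleaf (stopPayoff i)) s')) (hs' : S01 (!i) s') (hconv : Conv s')
    (h : PayoffRel (snode (mover i) c (sleaf (stopPayoff i)) s') g) : PayoffRel s' g := by
  cases c
  · obtain rfl := payoffRel_sleaf_iff.mp (payoffRel_snode_d_iff.mp h)
    obtain ⟨f, hf⟩ := hconv.exists_payoffRel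
    obtain ⟨k, rfl⟩ := hs'.exists_stopPayoff_eq hf
    rcases Bool.eq_or_eq_not k i with rfl | rfl
    · exact hf
    · exact absurd (hpe.2.1 _ _ _ _ _ rfl (PayoffRel.leaf _) hf)
        (not_le.mpr (stopPayoff_self_lt_not i))
  · exact payoffRel_snode_r_iff.mp h

lemma box_contStop_of_spe (h : SPE s) (hs : S01 i s) (hp : PayoffRel s (stopPayoff (!j))) :
    Box (ContStop j) s :=
  box_of_s01 (Q := fun u => SPE u ∧ PayoffRel u (stopPayoff (!j))) contStop_sleaf
    (fun _ _ _ hs' ⟨hspe, hpay⟩ =>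
      ⟨contStop_of_payoffRel hpay rfl (s01_snode hs'), hspe.children.2,
        payoffRel_of_pe_snode hspe.self hs' hspe.children.2.self.1.conv hpay⟩)
    hs ⟨h, hp⟩

end Characterization

/-- characterization of the subgame perfect equilibria of the 0,1-game. -/
theorem spe_characterization :
    ∀ s : StratProf, (S0 s ∨ S1 s) → ((SAcBes s ∨ SBcAes s) ↔ SPE s) := by
  intro s hs
  obtain ⟨i, hi⟩ : ∃ i, S01 i s := hs.elim (⟨true, ·⟩) (⟨false, ·⟩)
  constructor
  · rintro (h | h)
    exacts [spe_of_box_contStop (j := true) h hi, spe_of_box_contStop (j := false) h hi]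
  · intro h
    obtain ⟨f, hf⟩ := h.self.1.conv.exists_payoffRel
    obtain ⟨k, rfl⟩ := hi.exists_stopPayoff_eq hf
    cases k
    · exact Or.inl (box_contStop_of_spe (j := true) h hi hf)
    · exact Or.inr (box_contStop_of_spe (j := false) h hi hf)
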